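/- arXiv:2011.14063 — 8 statements merged into one kernel-verified Lean document; each statement's English description precedes it below -/
import Mathlib

section
/- If ℓ is a weak harmonic labeling of a finite connected graph G with at least two vertices, then the vertex attaining the maximum label and the vertex attaining the minimum label are both leaves of G. -/
/-- A weak harmonic labeling of a finite graph `G`: a bijection from the vertices onto
`{0, …, |V|−1} ⊆ ℤ` such that every non-leaf vertex's label is the average of its
neighbors' labels. -/
def IsWeakHarmonicLabeling {V : Type*} [Fintype V] (G : SimpleGraph V) (ℓ : V → ℤ) : Prop :=
  Set.BijOn ℓ Set.univ (Set.Icc 0 ((Fintype.card V : ℤ) - 1)) ∧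
  ∀ v : V, (G.neighborSet v).ncard ≠ 1 →
    ((G.neighborSet v).ncard : ℤ) * ℓ v = ∑ᶠ w ∈ G.neighborSet v, ℓ w

/-!
If `ℓ` is injective and harmonic at a vertex `v` of positive degree, then `v` has neighbours
labelled strictly below and strictly above `ℓ v`: an average of values that differ from `ℓ v`
and all lie on one side of it cannot equal `ℓ v`. Connectivity with two vertices rules out
isolated vertices, so a non-leaf with the extremal label `0` or `|V| − 1` would need a neighbour
labelled outside `{0, …, |V| − 1}`.
-/

namespace SimpleGraph

variable {V : Type*} (G : SimpleGraph V) (v : V) [Fintype (G.neighborSet v)]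

theorem ncard_neighborSet_eq_degree : (G.neighborSet v).ncard = G.degree v := by
  rw [← coe_neighborFinset, Set.ncard_coe_finset, card_neighborFinset_eq_degree]

theorem finsum_mem_neighborSet_eq_sum {M : Type*} [AddCommMonoid M] (f : V → M) :
    ∑ᶠ w ∈ G.neighborSet v, f w = ∑ w ∈ G.neighborFinset v, f w := by
  rw [← coe_neighborFinset, finsum_mem_coe_finset]

variable {G v} {M : Type*} [AddCommMonoid M] [LinearOrder M] [IsOrderedCancelAddMonoid M]
  {f : V → M}

theorem exists_adj_lt_of_degree_nsmul_eq_sum (hf : Function.Injective f)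
    (hv : 0 < G.degree v) (h : G.degree v • f v = ∑ w ∈ G.neighborFinset v, f w) :
    ∃ w, G.Adj v w ∧ f w < f v := by
  by_contra! hge
  have hlt : ∀ w ∈ G.neighborFinset v, f v < f w := fun w hw =>
    have hadj := (G.mem_neighborFinset v w).mp hw
    (hge w hadj).lt_of_ne (hf.ne hadj.ne)
  have hne : (G.neighborFinset v).Nonempty := by
    rwa [← Finset.card_pos, card_neighborFinset_eq_degree]
  have := Finset.sum_lt_sum_of_nonempty hne hlt
  rw [Finset.sum_const, card_neighborFinset_eq_degree] at this
  exact this.ne h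

theorem exists_adj_gt_of_degree_nsmul_eq_sum (hf : Function.Injective f)
    (hv : 0 < G.degree v) (h : G.degree v • f v = ∑ w ∈ G.neighborFinset v, f w) :
    ∃ w, G.Adj v w ∧ f v < f w :=
  exists_adj_lt_of_degree_nsmul_eq_sum (M := Mᵒᵈ) (f := OrderDual.toDual ∘ f) hf hv h

end SimpleGraph

open SimpleGraph in
/-- In a weak harmonic labeling of a finite connected graph with at least two vertices,
the vertices attaining the minimum label `0` and the maximum label `|V|−1` are leaves. -/
theorem extremal_labels_are_leaves {V : Type*} [Fintype V] (G : SimpleGraph V)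
    (hconn : G.Connected) (hcard : 2 ≤ Fintype.card V) (ℓ : V → ℤ)
    (hℓ : IsWeakHarmonicLabeling G ℓ) :
    ∀ v : V, (ℓ v = 0 ∨ ℓ v = (Fintype.card V : ℤ) - 1) → (G.neighborSet v).ncard = 1 := by
  classical
  obtain ⟨hbij, hharm⟩ := hℓ
  have hinj : Function.Injective ℓ := Set.injOn_univ.mp hbij.injOn
  have hrange (w : V) := hbij.mapsTo (Set.mem_univ w)
  have : Nontrivial V := Fintype.one_lt_card_iff_nontrivial.mp hcard
  intro v hv
  by_contra hleaf
  have hdeg := hconn.preconnected.degree_pos_of_nontrivial v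
  have hsum : G.degree v • ℓ v = ∑ w ∈ G.neighborFinset v, ℓ w := by
    rw [nsmul_eq_mul, ← ncard_neighborSet_eq_degree, hharm v hleaf,
      finsum_mem_neighborSet_eq_sum]
  obtain ⟨w₁, -, hw₁⟩ := exists_adj_lt_of_degree_nsmul_eq_sum hinj hdeg hsum
  obtain ⟨w₂, -, hw₂⟩ := exists_adj_gt_of_degree_nsmul_eq_sum hinj hdeg hsum
  obtain ⟨hlow, -⟩ := hrange w₁
  obtain ⟨-, hhigh⟩ := hrange w₂
  omega
end

section
/- Let G be a finite connected graph with n ≥ 3 vertices admitting a weak harmonic labeling. If G has exactly two leaves, then G is isomorphic to the path P_n. -/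
/-- A finite connected graph on `n ≥ 3` vertices admitting a weak harmonic labeling and
having exactly two leaves is isomorphic to the path `P_n`. -/
theorem two_leaves_implies_path {V : Type*} [Fintype V] (G : SimpleGraph V) (n : ℕ)
    (hconn : G.Connected) (hn : 3 ≤ n) (hcard : Fintype.card V = n)
    (hlab : ∃ ℓ : V → ℤ, IsWeakHarmonicLabeling G ℓ)
    (hleaves : {v : V | (G.neighborSet v).ncard = 1}.ncard = 2) :
    Nonempty (G ≃g SimpleGraph.pathGraph n) := by
  classical
  obtain ⟨ℓ, hbij, hharm⟩ := hlab
  -- basic reformulations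
  have hdegncard : ∀ v : V, (G.neighborSet v).ncard = G.degree v := by
    intro v
    rw [Set.ncard_eq_toFinset_card', SimpleGraph.degree, SimpleGraph.neighborFinset_def]
  have hinj : Function.Injective ℓ := fun a b h =>
    hbij.injOn (Set.mem_univ a) (Set.mem_univ b) h
  have hmem : ∀ v : V, 0 ≤ ℓ v ∧ ℓ v ≤ (n : ℤ) - 1 := by
    intro v
    have := hbij.mapsTo (Set.mem_univ v)
    rw [hcard] at this
    exact ⟨this.1, this.2⟩
  have hsurj : ∀ k : ℤ, 0 ≤ k → k ≤ (n : ℤ) - 1 → ∃ v, ℓ v = k := by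
    intro k h0 h1
    obtain ⟨v, -, hv⟩ := hbij.surjOn (by rw [hcard]; exact ⟨h0, h1⟩ : k ∈ Set.Icc 0 ((Fintype.card V : ℤ) - 1))
    exact ⟨v, hv⟩
  have hh : ∀ v : V, G.degree v ≠ 1 →
      (G.degree v : ℤ) * ℓ v = ∑ w ∈ G.neighborFinset v, ℓ w := by
    intro v hd
    have h := hharm v (by rw [hdegncard]; exact hd)
    rw [hdegncard] at h
    rw [h, ← finsum_mem_coe_finset, SimpleGraph.neighborFinset_def, Set.coe_toFinset]
  have hdpos : ∀ v : V, 0 < G.degree v := by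
    intro v
    rw [SimpleGraph.degree_pos_iff_exists_adj]
    obtain ⟨w, hw⟩ := Fintype.exists_ne_of_one_lt_card (by omega) v
    obtain ⟨p⟩ := hconn.preconnected v w
    cases p with
    | nil => exact absurd rfl hw
    | cons h _ => exact ⟨_, h⟩
  -- the vertex labeled 0 is a leaf
  have hleaf0 : ∀ v : V, ℓ v = 0 → G.degree v = 1 := by
    intro v hv
    by_contra hne
    have h := hh v hne
    have hpos : (0 : ℤ) < ∑ w ∈ G.neighborFinset v, ℓ w := by
      apply Finset.sum_pos
      · intro w hw
        rw [SimpleGraph.mem_neighborFinset] at hw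
        have hne' : ℓ w ≠ 0 := fun e => hw.ne' (hinj (e.trans hv.symm))
        have := (hmem w).1
        omega
      · exact Finset.card_pos.mp (hdpos v)
    rw [← h, hv, mul_zero] at hpos
    exact lt_irrefl _ hpos
  -- the vertex labeled n-1 is a leaf
  have hleafmax : ∀ v : V, ℓ v = (n : ℤ) - 1 → G.degree v = 1 := by
    intro v hv
    by_contra hne
    have h := hh v hne
    have hub : ∀ w ∈ G.neighborFinset v, ℓ w ≤ (n : ℤ) - 2 := by
      intro w hw
      rw [SimpleGraph.mem_neighborFinset] at hw
      have hne' : ℓ w ≠ (n : ℤ) - 1 := fun e => hw.ne' (hinj (e.trans hv.symm))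
      have := (hmem w).2
      omega
    have hle := Finset.sum_le_card_nsmul (G.neighborFinset v) ℓ ((n : ℤ) - 2) hub
    rw [nsmul_eq_mul] at hle
    rw [← h, hv] at hle
    have hd1 : (1 : ℤ) ≤ (G.degree v : ℤ) := by exact_mod_cast hdpos v
    have hcardeq : ((G.neighborFinset v).card : ℤ) = (G.degree v : ℤ) := rfl
    rw [hcardeq] at hle
    nlinarith
  -- leaves are exactly the vertices labeled 0 and n-1
  obtain ⟨v0, hv0⟩ := hsurj 0 le_rfl (by omega)
  obtain ⟨vm, hvm⟩ := hsurj ((n : ℤ) - 1) (by omega) le_rfl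
  have hv0m : v0 ≠ vm := fun e => by rw [e, hvm] at hv0; omega
  have hset : {v : V | (G.neighborSet v).ncard = 1} = {v0, vm} := by
    symm
    apply Set.eq_of_subset_of_ncard_le
    · intro x hx
      rcases hx with rfl | rfl
      · show (G.neighborSet x).ncard = 1
        rw [hdegncard]; exact hleaf0 x hv0
      · show (G.neighborSet x).ncard = 1
        rw [hdegncard]; exact hleafmax x hvm
    · rw [hleaves, Set.ncard_pair hv0m]
    · exact Set.toFinite _
  have hnotleaf : ∀ v : V, ℓ v ≠ 0 → ℓ v ≠ (n : ℤ) - 1 → G.degree v ≠ 1 := by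
    intro v h0 h1 hd
    have hv : v ∈ {v : V | (G.neighborSet v).ncard = 1} := by
      show (G.neighborSet v).ncard = 1
      rw [hdegncard]; exact hd
    rw [hset] at hv
    rcases hv with rfl | rfl
    · exact h0 hv0
    · exact h1 hvm
  -- main induction: vertex labeled k (1 ≤ k ≤ n-2) is adjacent exactly to labels k-1, k+1
  have key : ∀ k : ℕ, 1 ≤ k → k ≤ n - 2 → ∀ v, ℓ v = (k : ℤ) →
      ∀ w, G.Adj v w ↔ (ℓ w = (k : ℤ) - 1 ∨ ℓ w = (k : ℤ) + 1) := by
    intro k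
    induction k using Nat.strong_induction_on with
    | _ k ih =>
    intro hk1 hk2 v hv
    have hkub : (k : ℤ) ≤ (n : ℤ) - 2 := by omega
    have hd : G.degree v ≠ 1 := by
      apply hnotleaf v <;> rw [hv] <;> omega
    have hd2 : 2 ≤ G.degree v := by have := hdpos v; omega
    have heq := hh v hd
    -- neighbor labels are k-1 or ≥ k+1
    have hnbr : ∀ w ∈ G.neighborFinset v, ℓ w = (k : ℤ) - 1 ∨ (k : ℤ) + 1 ≤ ℓ w := by
      intro w hw
      rw [SimpleGraph.mem_neighborFinset] at hw
      have hwne : ℓ w ≠ (k : ℤ) := fun e => hw.ne' (hinj (e.trans hv.symm))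
      have hge : 0 ≤ ℓ w := (hmem w).1
      by_contra hcon
      push_neg at hcon
      obtain ⟨hne1, hlt⟩ := hcon
      have hle2 : ℓ w ≤ (k : ℤ) - 2 := by omega
      by_cases hj0 : ℓ w = 0
      · -- w is the leaf labeled 0, but then it has two neighbors
        have hk2' : 2 ≤ k := by omega
        have hwv0 : w = v0 := hinj (hj0.trans hv0.symm)
        obtain ⟨v1, hv1⟩ := hsurj 1 (by omega) (by omega)
        have h1 := ih 1 (by omega) (by omega) (by omega) v1 (by exact_mod_cast hv1)
        have hadj1 : G.Adj v1 v0 := by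
          rw [h1 v0]
          left; rw [hv0]; norm_num
        have hdw : G.degree v0 = 1 := hleaf0 v0 hv0
        have hm1 : v ∈ G.neighborFinset v0 := by
          rw [SimpleGraph.mem_neighborFinset]; exact (hwv0 ▸ hw).symm
        have hm2 : v1 ∈ G.neighborFinset v0 := by
          rw [SimpleGraph.mem_neighborFinset]; exact hadj1.symm
        have hvv1 : v ≠ v1 := fun e => by rw [e, hv1] at hv; omega
        have : 1 < (G.neighborFinset v0).card :=
          Finset.one_lt_card_iff.mpr ⟨v, v1, hm1, hm2, hvv1⟩
        rw [SimpleGraph.card_neighborFinset_eq_degree] at this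
        omega
      · -- w has label j with 1 ≤ j ≤ k-2; its neighbors have labels j±1 ≠ k
        have hj : ((ℓ w).toNat : ℤ) = ℓ w := Int.toNat_of_nonneg hge
        have h1 := ih (ℓ w).toNat (by omega) (by omega) (by omega) w hj.symm
        have := (h1 v).mp hw.symm
        rw [hv] at this
        omega
    -- there is a neighbor labeled k-1
    have hexu : ∃ u ∈ G.neighborFinset v, ℓ u = (k : ℤ) - 1 := by
      by_contra hcon
      push_neg at hcon
      have hall : ∀ w ∈ G.neighborFinset v, (k : ℤ) + 1 ≤ ℓ w := by
        intro w hw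
        rcases hnbr w hw with h | h
        · exact absurd h (hcon w hw)
        · exact h
      have hle := Finset.card_nsmul_le_sum (G.neighborFinset v) ℓ ((k : ℤ) + 1) hall
      rw [nsmul_eq_mul] at hle
      rw [← heq, hv] at hle
      have hcardeq : ((G.neighborFinset v).card : ℤ) = (G.degree v : ℤ) := rfl
      rw [hcardeq] at hle
      have hd1 : (2 : ℤ) ≤ (G.degree v : ℤ) := by exact_mod_cast hd2
      nlinarith
    obtain ⟨u, hu, hlu⟩ := hexu
    -- bound the sum over the remaining neighbors
    have hrest : ∀ w ∈ (G.neighborFinset v).erase u, (k : ℤ) + 1 ≤ ℓ w := by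
      intro w hw
      have hwne := Finset.ne_of_mem_erase hw
      have hwmem := Finset.mem_of_mem_erase hw
      rcases hnbr w hwmem with h | h
      · exact absurd (hinj (h.trans hlu.symm)) hwne
      · exact h
    have hsum_split : ℓ u + ∑ w ∈ (G.neighborFinset v).erase u, ℓ w
        = ∑ w ∈ G.neighborFinset v, ℓ w := Finset.add_sum_erase _ _ hu
    have hle := Finset.card_nsmul_le_sum ((G.neighborFinset v).erase u) ℓ ((k : ℤ) + 1) hrest
    rw [nsmul_eq_mul] at hle
    have hcarderase : ((G.neighborFinset v).erase u).card = G.degree v - 1 := by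
      rw [Finset.card_erase_of_mem hu, SimpleGraph.card_neighborFinset_eq_degree]
    have hd1 : (2 : ℤ) ≤ (G.degree v : ℤ) := by exact_mod_cast hd2
    have hcast : (((G.neighborFinset v).erase u).card : ℤ) = (G.degree v : ℤ) - 1 := by
      rw [hcarderase]; omega
    rw [hcast] at hle
    -- conclude degree = 2
    have hdeq : G.degree v = 2 := by
      have h2 : (G.degree v : ℤ) ≤ 2 := by nlinarith [heq, hsum_split, hle, hlu, hv]
      omega
    -- the erased set is a singleton with label k+1
    have hone : ((G.neighborFinset v).erase u).card = 1 := by rw [hcarderase, hdeq]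
    obtain ⟨u2, hu2⟩ := Finset.card_eq_one.mp hone
    have hlu2 : ℓ u2 = (k : ℤ) + 1 := by
      have hs : ∑ w ∈ (G.neighborFinset v).erase u, ℓ w = ℓ u2 := by
        rw [hu2, Finset.sum_singleton]
      rw [hs] at hsum_split
      rw [← hsum_split, hlu, hv, hdeq] at heq
      push_cast at heq
      omega
    have hS : G.neighborFinset v = {u, u2} := by
      rw [← Finset.insert_erase hu, hu2]
    intro w
    constructor
    · intro hw
      have : w ∈ G.neighborFinset v := (SimpleGraph.mem_neighborFinset _ _ _).mpr hw
      rw [hS] at this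
      rcases Finset.mem_insert.mp this with rfl | h
      · left; exact hlu
      · right; rw [Finset.mem_singleton] at h; rw [h]; exact hlu2
    · intro hw
      have hwmem : w ∈ G.neighborFinset v := by
        rw [hS]
        rcases hw with h | h
        · have : w = u := hinj (h.trans hlu.symm)
          rw [this]; exact Finset.mem_insert_self _ _
        · have : w = u2 := hinj (h.trans hlu2.symm)
          rw [this]; exact Finset.mem_insert_of_mem (Finset.mem_singleton_self _)
      exact (SimpleGraph.mem_neighborFinset _ _ _).mp hwmem
  -- characterization of adjacency, backward direction
  have main : ∀ v w : V, ℓ w = ℓ v + 1 → G.Adj v w := by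
    intro v w hw
    have hv1 := (hmem v).1
    have hv2 := (hmem v).2
    have hw2 := (hmem w).2
    by_cases h0 : ℓ v = 0
    · -- use the vertex labeled 1, i.e. w itself
      have hlw : ℓ w = 1 := by omega
      have h1 := key 1 le_rfl (by omega) w (by exact_mod_cast hlw) v
      have : G.Adj w v := by rw [h1]; left; rw [h0]; norm_num
      exact this.symm
    · have hkub : ℓ v ≤ (n : ℤ) - 2 := by omega
      have hj : ((ℓ v).toNat : ℤ) = ℓ v := Int.toNat_of_nonneg hv1
      have h1 := key (ℓ v).toNat (by omega) (by omega) v hj.symm w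
      rw [h1]; right; omega
  -- characterization of adjacency, forward direction
  have main2 : ∀ v w : V, G.Adj v w → ℓ w = ℓ v + 1 ∨ ℓ v = ℓ w + 1 := by
    intro v w hvw
    have hv1 := (hmem v).1
    have hv2 := (hmem v).2
    by_cases h0 : ℓ v = 0
    · -- v is the leaf labeled 0; its unique neighbor is labeled 1
      obtain ⟨v1, hv1'⟩ := hsurj 1 (by omega) (by omega)
      have hadj : G.Adj v v1 := main v v1 (by omega)
      have hdw : G.degree v = 1 := hleaf0 v h0
      have hm1 : w ∈ G.neighborFinset v := (SimpleGraph.mem_neighborFinset _ _ _).mpr hvw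
      have hm2 : v1 ∈ G.neighborFinset v := (SimpleGraph.mem_neighborFinset _ _ _).mpr hadj
      have hcard1 : (G.neighborFinset v).card ≤ 1 := by
        rw [SimpleGraph.card_neighborFinset_eq_degree, hdw]
      have : w = v1 := Finset.card_le_one.mp hcard1 w hm1 v1 hm2
      left; rw [this]; omega
    · by_cases hmx : ℓ v = (n : ℤ) - 1
      · -- v is the leaf labeled n-1; its unique neighbor is labeled n-2
        obtain ⟨u, hu'⟩ := hsurj ((n : ℤ) - 2) (by omega) (by omega)
        have hadj : G.Adj u v := main u v (by omega)
        have hdw : G.degree v = 1 := hleafmax v hmx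
        have hm1 : w ∈ G.neighborFinset v := (SimpleGraph.mem_neighborFinset _ _ _).mpr hvw
        have hm2 : u ∈ G.neighborFinset v := (SimpleGraph.mem_neighborFinset _ _ _).mpr hadj.symm
        have hcard1 : (G.neighborFinset v).card ≤ 1 := by
          rw [SimpleGraph.card_neighborFinset_eq_degree, hdw]
        have : w = u := Finset.card_le_one.mp hcard1 w hm1 u hm2
        right; rw [this, hu', hmx]; omega
      · have hj : ((ℓ v).toNat : ℤ) = ℓ v := Int.toNat_of_nonneg hv1
        have h1 := key (ℓ v).toNat (by omega) (by omega) v hj.symm w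
        rcases h1.mp hvw with h | h
        · right; omega
        · left; omega
  -- build the isomorphism
  have hfbound : ∀ v : V, (ℓ v).toNat < n := by
    intro v
    have h1 := (hmem v).1
    have h2 := (hmem v).2
    omega
  let f : V → Fin n := fun v => ⟨(ℓ v).toNat, hfbound v⟩
  have hfinj : Function.Injective f := by
    intro a b h
    have h1 := (hmem a).1
    have h2 := (hmem b).1
    apply hinj
    have := Fin.mk.injEq _ _ _ _ ▸ h
    have heq : (ℓ a).toNat = (ℓ b).toNat := congrArg Fin.val h
    omega
  have hfbij : Function.Bijective f := by
    rw [Fintype.bijective_iff_injective_and_card]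
    exact ⟨hfinj, by simp [hcard]⟩
  refine ⟨⟨Equiv.ofBijective f hfbij, ?_⟩⟩
  intro a b
  simp only [Equiv.ofBijective_apply, SimpleGraph.pathGraph_adj]
  show ((ℓ a).toNat + 1 = (ℓ b).toNat ∨ (ℓ b).toNat + 1 = (ℓ a).toNat) ↔ G.Adj a b
  have h1 := (hmem a).1
  have h2 := (hmem b).1
  have hiff : G.Adj a b ↔ (ℓ b = ℓ a + 1 ∨ ℓ a = ℓ b + 1) :=
    ⟨main2 a b, fun h => h.elim (main a b) (fun h' => (main b a h').symm)⟩
  rw [hiff]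
  omega
end

section
/- Let G be a finite connected graph with n vertices admitting a weak harmonic labeling. If G has exactly n−1 leaves, then n is odd (so the number of leaves is even) and G is isomorphic to the star K_{1,n−1}. -/
/-- The star `K_{1,m}` on `Fin (m+1)` with center `0`. -/
def starGraph (m : ℕ) : SimpleGraph (Fin (m + 1)) :=
  SimpleGraph.fromRel (fun i _ => i = 0)

private lemma gauss' (n : ℕ) : 2 * ∑ k ∈ Finset.Icc (0:ℤ) ((n:ℤ)-1), k = n * ((n:ℤ)-1) := by
  induction n with
  | zero => simp
  | succ m ih =>
    have h2 : Finset.Icc (0:ℤ) (((m:ℕ)+1:ℤ)-1) = insert ((m:ℤ)) (Finset.Icc 0 ((m:ℤ)-1)) := by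
      ext x; simp only [Finset.mem_Icc, Finset.mem_insert]; omega
    push_cast
    push_cast at h2
    rw [h2, Finset.sum_insert (by simp)]
    push_cast at ih
    linarith

private lemma closed_set_reach {V : Type*} (G : SimpleGraph V) (S : Set V)
    (h : ∀ a ∈ S, ∀ b, G.Adj a b → b ∈ S) {x y : V} (w : G.Walk x y) (hx : x ∈ S) : y ∈ S := by
  induction w with
  | nil => exact hx
  | cons h' p ih => exact ih (h _ hx _ h')


/-- A finite connected graph on `n` vertices admitting a weak harmonic labeling and
having exactly `n − 1` leaves satisfies: `n` is odd and `G` is isomorphic to the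
star `K_{1,n−1}`. -/
theorem all_but_one_leaves_implies_star {V : Type*} [Fintype V] (G : SimpleGraph V) (n : ℕ)
    (hconn : G.Connected) (hcard : Fintype.card V = n)
    (hlab : ∃ ℓ : V → ℤ, IsWeakHarmonicLabeling G ℓ)
    (hleaves : {v : V | (G.neighborSet v).ncard = 1}.ncard = n - 1) :
    Odd n ∧ Nonempty (G ≃g starGraph (n - 1)) := by
  classical
  obtain ⟨ℓ, hbij, hharm⟩ := hlab
  have hne : Nonempty V := hconn.nonempty
  have hn1 : 1 ≤ n := hcard ▸ Fintype.card_pos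
  set L : Set V := {v : V | (G.neighborSet v).ncard = 1} with hL
  have hcompl : L.ncard + Lᶜ.ncard = n := by
    rw [Set.ncard_add_ncard_compl, Nat.card_eq_fintype_card, hcard]
  have hc1 : Lᶜ.ncard = 1 := by omega
  obtain ⟨c, hc⟩ := Set.ncard_eq_one.mp hc1
  have hcnl : (G.neighborSet c).ncard ≠ 1 := by
    have : c ∈ Lᶜ := by rw [hc]; rfl
    exact this
  have hleaf : ∀ v : V, v ≠ c → (G.neighborSet v).ncard = 1 := by
    intro v hv
    by_contra hvc
    have hm : v ∈ Lᶜ := hvc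
    rw [hc] at hm
    exact hv hm
  have hadjc : ∀ v : V, v ≠ c → G.Adj v c := by
    intro v hv
    obtain ⟨w, hw⟩ := Set.ncard_eq_one.mp (hleaf v hv)
    have hvw : G.Adj v w := by
      have : w ∈ G.neighborSet v := by rw [hw]; rfl
      exact this
    by_cases hwc : w = c
    · exact hwc ▸ hvw
    · exfalso
      obtain ⟨w', hw'⟩ := Set.ncard_eq_one.mp (hleaf w hwc)
      have hw'v : w' = v := by
        have hm : v ∈ G.neighborSet w := hvw.symm
        rw [hw'] at hm
        exact hm.symm
      rw [hw'v] at hw'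
      have hclosed : ∀ a ∈ ({v, w} : Set V), ∀ b, G.Adj a b → b ∈ ({v, w} : Set V) := by
        rintro a (rfl | rfl) b hab
        · have hm : b ∈ G.neighborSet a := hab
          rw [hw] at hm; right; exact hm
        · have hm : b ∈ G.neighborSet a := hab
          rw [hw'] at hm; left; exact hm
      obtain ⟨p⟩ := hconn.preconnected v c
      have hcmem : c ∈ ({v, w} : Set V) := closed_set_reach G _ hclosed p (Or.inl rfl)
      rcases hcmem with rfl | rfl
      · exact hv rfl
      · exact hwc rfl
  have hns : G.neighborSet c = {v : V | v ≠ c} := by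
    ext v
    constructor
    · intro h
      exact (G.ne_of_adj h).symm
    · intro h
      exact (hadjc v h).symm
  -- degree of c
  have hnsc : G.neighborSet c = (Finset.univ.erase c : Finset V) := by
    rw [hns]; ext v; simp
  have hdegc : (G.neighborSet c).ncard = n - 1 := by
    rw [hnsc, Set.ncard_coe_finset, Finset.card_erase_of_mem (Finset.mem_univ c),
      Finset.card_univ, hcard]
  have hn2 : n ≠ 2 := by
    intro h; rw [hdegc, h] at hcnl; exact hcnl rfl
  -- sum of all labels
  have hsum : ∑ v : V, ℓ v = ∑ k ∈ Finset.Icc (0:ℤ) ((n:ℤ)-1), k := by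
    apply Finset.sum_bij (fun a _ => ℓ a)
    · intro a _
      have := hbij.mapsTo (Set.mem_univ a)
      rw [hcard] at this
      simpa [Finset.mem_Icc] using this
    · intro a _ b _ hab
      exact hbij.injOn (Set.mem_univ a) (Set.mem_univ b) hab
    · intro b hb
      have hb' : b ∈ Set.Icc (0:ℤ) ((Fintype.card V : ℤ) - 1) := by
        rw [hcard]; simpa [Finset.mem_Icc] using hb
      obtain ⟨a, -, ha⟩ := hbij.surjOn hb'
      exact ⟨a, Finset.mem_univ a, ha⟩
    · intro a _; rfl
  -- harmonic condition at c
  have hharmc := hharm c hcnl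
  have hfin : ∑ᶠ w ∈ G.neighborSet c, ℓ w = ∑ w ∈ Finset.univ.erase c, ℓ w := by
    rw [hnsc, finsum_mem_coe_finset]
  have herase : ∑ w ∈ Finset.univ.erase c, ℓ w + ℓ c = ∑ v : V, ℓ v :=
    Finset.sum_erase_add _ _ (Finset.mem_univ c)
  have hkey : (n : ℤ) * ℓ c = ∑ v : V, ℓ v := by
    rw [hfin, hdegc] at hharmc
    have hcast : ((n - 1 : ℕ) : ℤ) = (n : ℤ) - 1 := by omega
    rw [hcast] at hharmc
    linarith
  have hgauss := gauss' n
  rw [← hsum] at hgauss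
  have hlc : 2 * ℓ c = (n : ℤ) - 1 := by
    have hnz : (n : ℤ) ≠ 0 := by exact_mod_cast (by omega : n ≠ 0)
    have : (n : ℤ) * (2 * ℓ c) = (n : ℤ) * ((n:ℤ) - 1) := by linarith [hkey]
    exact mul_left_cancel₀ hnz this
  have hodd : Odd n := by
    rw [← Int.odd_coe_nat]
    exact ⟨ℓ c, by linarith⟩
  refine ⟨hodd, ?_⟩
  -- the isomorphism
  have hcard1 : Fintype.card V = (n - 1) + 1 := by omega
  let e0 := Fintype.equivFinOfCardEq hcard1
  let e : V ≃ Fin ((n-1)+1) := e0.trans (Equiv.swap (e0 c) 0)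
  have hec : e c = 0 := by simp [e, Equiv.swap_apply_left]
  have he0 : ∀ u : V, e u = 0 ↔ u = c := by
    intro u
    constructor
    · intro h; exact e.injective (h.trans hec.symm)
    · rintro rfl; exact hec
  have hadj : ∀ u v : V, G.Adj u v ↔ u ≠ v ∧ (u = c ∨ v = c) := by
    intro u v
    constructor
    · intro h
      refine ⟨G.ne_of_adj h, ?_⟩
      by_contra hcon
      push_neg at hcon
      obtain ⟨hu, hv⟩ := hcon
      obtain ⟨w, hw⟩ := Set.ncard_eq_one.mp (hleaf u hu)
      have h1 : v ∈ G.neighborSet u := h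
      have h2 : c ∈ G.neighborSet u := hadjc u hu
      rw [hw] at h1 h2
      exact hv (h1.trans h2.symm)
    · rintro ⟨hne', (rfl | rfl)⟩
      · exact (hadjc v (Ne.symm hne')).symm
      · exact hadjc u hne'
  refine ⟨⟨e, ?_⟩⟩
  intro u v
  simp only [starGraph, SimpleGraph.fromRel_adj, Equiv.coe_fn_mk]
  rw [hadj u v, he0, he0, ne_eq, e.apply_eq_iff_eq]
end

section
/- Coalescence of weakly labeled graphs: let G and H be graphs with weak harmonic labelings ℓ_G: V_G → {0,…,n−1} and ℓ_H: V_H → I (where I = {0,…,m−1} or ℤ_{≥0}). Suppose the vertex v_{n−1} labeled n−1 in G is a leaf whose unique neighbor v satisfies ℓ_G(v) + ℓ_H(w) = n−1, where w is the unique neighbor of the vertex w_0 labeled 0 in H (also a leaf). Then the graph G·H obtained by identifying v_{n−1} with w_0 admits a weak harmonic labeling, given by ℓ(u) = ℓ_G(u) for u ∈ G and ℓ(u) = ℓ_H(u) + n − 1 for u ∈ H. -/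
/-- The coalescence `G ·_a^b H`: the disjoint union of `G` and `H` with the vertex `a`
of `G` identified with the vertex `b` of `H`. -/
def coalescence {α β : Type*} (G : SimpleGraph α) (H : SimpleGraph β) (a : α) (b : β) :
    SimpleGraph (α ⊕ {y : β // y ≠ b}) :=
  SimpleGraph.fromRel (fun u v =>
    match u, v with
    | Sum.inl x, Sum.inl y => G.Adj x y
    | Sum.inl x, Sum.inr y => x = a ∧ H.Adj b y.1
    | Sum.inr x, Sum.inr y => H.Adj x.1 y.1
    | Sum.inr _, Sum.inl _ => False)

/-!
Labels of `G` stay in `[0, n - 1]` and labels of `H` other than `ℓH b = 0` are shifted into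
`[n, ∞)`, so the combined labeling is injective and its range is the union of two intervals
meeting at `n - 1`. Harmonicity at a vertex of `G` or `H` away from the glued vertex is
inherited, because shifting every label by the same constant preserves the harmonic equation.
The glued vertex has just the two neighbours `v` and `w`, and `ℓG v + ℓH w = n - 1` is exactly
harmonicity there.
-/

open Function

section Finsum

variable {α R : Type*}

theorem finsum_mem_eq_zero_of_injective_of_infinite [AddCommMonoid R] {f : α → R} {s : Set α}
    (hf : Injective f) (hs : s.Infinite) : ∑ᶠ x ∈ s, f x = 0 := by
  refine finsum_mem_eq_zero_of_infinite ?_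
  have hzero : (f ⁻¹' {0}).Finite := (Set.subsingleton_singleton.preimage hf).finite
  exact (hs.sdiff hzero).mono fun x hx => ⟨hx.1, hx.2⟩

/-- On an infinite `s` both sides are `0`: `ncard` by convention, the `finsum` by
`finsum_mem_eq_zero_of_injective_of_infinite`. -/
theorem ncard_mul_add_eq_finsum_mem_add [CommRing R] {f : α → R} {s : Set α} {t : R} (c : R)
    (hf : Injective f) (h : (s.ncard : R) * t = ∑ᶠ x ∈ s, f x) :
    (s.ncard : R) * (t + c) = ∑ᶠ x ∈ s, (f x + c) := by
  rcases s.finite_or_infinite with hs | hs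
  · have hconst : ∑ᶠ _x ∈ s, c = (s.ncard : R) * c := by
      rw [finsum_mem_eq_finite_toFinset_sum _ hs, Finset.sum_const, nsmul_eq_mul,
        Set.ncard_eq_toFinset_card s hs]
    rw [finsum_mem_add_distrib hs, ← h, hconst, mul_add]
  · rw [hs.ncard, Nat.cast_zero, zero_mul, finsum_mem_eq_zero_of_injective_of_infinite
      (f := fun x => f x + c) ((add_left_injective c).comp hf) hs]

end Finsum

/-- An infinite neighbourhood has `ncard = 0`, so it counts as a non-leaf. -/
def SimpleGraph.IsWeakHarmonic {V : Type*} (G : SimpleGraph V) (ℓ : V → ℤ) : Prop :=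
  ∀ x, (G.neighborSet x).ncard ≠ 1 →
    ((G.neighborSet x).ncard : ℤ) * ℓ x = ∑ᶠ y ∈ G.neighborSet x, ℓ y

section Coalescence

variable {α β : Type*} {G : SimpleGraph α} {H : SimpleGraph β} {a : α} {b : β}

@[simp]
theorem coalescence_adj_inl_inl {x y : α} :
    (coalescence G H a b).Adj (.inl x) (.inl y) ↔ G.Adj x y := by
  simp only [ne_eq, coalescence, SimpleGraph.fromRel_adj, Sum.inl.injEq, G.adj_comm y x, or_self,
    and_iff_right_iff_imp]
  exact G.ne_of_adj

@[simp]
theorem coalescence_adj_inl_inr {x : α} {y : {y : β // y ≠ b}} :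
    (coalescence G H a b).Adj (.inl x) (.inr y) ↔ x = a ∧ H.Adj b y := by
  simp [coalescence]

@[simp]
theorem coalescence_adj_inr_inl {x : α} {y : {y : β // y ≠ b}} :
    (coalescence G H a b).Adj (.inr y) (.inl x) ↔ x = a ∧ H.Adj b y := by
  simp [coalescence]

@[simp]
theorem coalescence_adj_inr_inr {x y : {y : β // y ≠ b}} :
    (coalescence G H a b).Adj (.inr x) (.inr y) ↔ H.Adj x y := by
  simp only [ne_eq, coalescence, SimpleGraph.fromRel_adj, Sum.inr.injEq, H.adj_comm y x, or_self,
    and_iff_right_iff_imp]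
  exact fun hxy hxy' => hxy.ne (congrArg Subtype.val hxy')

variable (a b) in
open Classical in
noncomputable def coalescenceRight (z : β) : α ⊕ {y : β // y ≠ b} :=
  if h : z = b then .inl a else .inr ⟨z, h⟩

@[simp]
theorem coalescenceRight_self : coalescenceRight a b b = .inl a := by
  simp [coalescenceRight]

theorem coalescenceRight_of_ne {z : β} (hz : z ≠ b) :
    coalescenceRight a b z = .inr ⟨z, hz⟩ := by
  simp [coalescenceRight, hz]

@[simp]
theorem coalescenceRight_eq_inl_iff {z : β} {x : α} :
    coalescenceRight a b z = .inl x ↔ z = b ∧ a = x := by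
  by_cases hz : z = b <;> simp [coalescenceRight, hz]

@[simp]
theorem coalescenceRight_eq_inr_iff {z : β} {y : {y : β // y ≠ b}} :
    coalescenceRight a b z = .inr y ↔ z = y := by
  by_cases hz : z = b
  · simp [coalescenceRight, hz, y.2.symm]
  · simp [coalescenceRight, hz, Subtype.ext_iff]

theorem coalescenceRight_injective : Injective (coalescenceRight a b) := by
  intro z z' h
  by_cases hz : z = b <;> by_cases hz' : z' = b
  · rw [hz, hz']
  · simp [hz, coalescenceRight_of_ne hz'] at h
  · simp [hz', coalescenceRight_of_ne hz] at h
  · simpa [coalescenceRight_of_ne hz, coalescenceRight_of_ne hz'] using h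

theorem coalescence_neighborSet_inl_of_ne {x : α} (hx : x ≠ a) :
    (coalescence G H a b).neighborSet (.inl x) = Sum.inl '' G.neighborSet x := by
  ext (y | y) <;> simp [hx]

theorem coalescence_neighborSet_inl_self :
    (coalescence G H a b).neighborSet (.inl a) =
      Sum.inl '' G.neighborSet a ∪ coalescenceRight a b '' H.neighborSet b := by
  ext (y | y) <;> simp

theorem coalescence_neighborSet_inr (y : {y : β // y ≠ b}) :
    (coalescence G H a b).neighborSet (.inr y) = coalescenceRight a b '' H.neighborSet y := by
  ext (x | z)
  · simp [H.adj_comm _ b, and_comm, eq_comm]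
  · simp

variable (b) in
def coalescenceLabeling (ℓG : α → ℤ) (ℓH : β → ℤ) (c : ℤ) : α ⊕ {y : β // y ≠ b} → ℤ :=
  Sum.elim ℓG fun y => ℓH y + c

variable {ℓG : α → ℤ} {ℓH : β → ℤ} {c : ℤ}

theorem coalescenceLabeling_coalescenceRight (ha : ℓG a = c) (hb : ℓH b = 0) (z : β) :
    coalescenceLabeling b ℓG ℓH c (coalescenceRight a b z) = ℓH z + c := by
  by_cases hz : z = b
  · simp [coalescenceLabeling, hz, ha, hb]
  · simp [coalescenceLabeling, coalescenceRight_of_ne hz]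

theorem coalescenceLabeling_injective (hGinj : Injective ℓG) (hHinj : Injective ℓH)
    (hGle : ∀ x, ℓG x ≤ c) (hHnonneg : ∀ z, 0 ≤ ℓH z) (hb : ℓH b = 0) :
    Injective (coalescenceLabeling b ℓG ℓH c) := by
  refine hGinj.sumElim ((add_left_injective c).comp (hHinj.comp Subtype.val_injective)) ?_
  intro x y
  have hy : ℓH y ≠ 0 := fun h => y.2 (hHinj (h.trans hb.symm))
  have := hGle x
  have := hHnonneg y
  omega

theorem range_coalescenceLabeling (ha : ℓG a = c) (hb : ℓH b = 0) :
    Set.range (coalescenceLabeling b ℓG ℓH c) = Set.range ℓG ∪ (· + c) '' Set.range ℓH := by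
  refine subset_antisymm ?_ (Set.union_subset ?_ ?_)
  · rw [coalescenceLabeling, Set.Sum.elim_range]
    exact Set.union_subset_union_right _ fun _ ⟨y, hy⟩ => ⟨ℓH y, ⟨y, rfl⟩, hy⟩
  · rintro _ ⟨x, rfl⟩
    exact ⟨.inl x, rfl⟩
  · rintro _ ⟨_, ⟨z, rfl⟩, rfl⟩
    exact ⟨coalescenceRight a b z, coalescenceLabeling_coalescenceRight ha hb z⟩

theorem isWeakHarmonic_coalescenceLabeling (hG : G.IsWeakHarmonic ℓG) (hH : H.IsWeakHarmonic ℓH)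
    (hHinj : Injective ℓH) (ha : ℓG a = c) (hb : ℓH b = 0) {v : α} (hav : G.neighborSet a = {v})
    {w : β} (hbw : H.neighborSet b = {w}) (hsum : ℓG v + ℓH w = c) :
    (coalescence G H a b).IsWeakHarmonic (coalescenceLabeling b ℓG ℓH c) := by
  rintro (x | y) hdeg
  · by_cases hx : x = a
    · subst hx
      have hwb : w ≠ b := (H.ne_of_adj (show w ∈ H.neighborSet b by simp [hbw])).symm
      have hvw : (Sum.inl v : α ⊕ {y : β // y ≠ b}) ≠ coalescenceRight x b w := by
        simp [coalescenceRight_of_ne hwb]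
      rw [coalescence_neighborSet_inl_self, hav, hbw, Set.image_singleton, Set.image_singleton,
        ← Set.insert_eq, Set.ncard_pair hvw, finsum_mem_pair hvw,
        coalescenceLabeling_coalescenceRight ha hb]
      simp only [coalescenceLabeling, Sum.elim_inl]
      push_cast
      linarith
    · rw [coalescence_neighborSet_inl_of_ne hx,
        Set.ncard_image_of_injective _ Sum.inl_injective] at hdeg ⊢
      rw [finsum_mem_image Sum.inl_injective.injOn]
      exact hG x hdeg
  · rw [coalescence_neighborSet_inr,
      Set.ncard_image_of_injective _ coalescenceRight_injective] at hdeg ⊢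
    rw [finsum_mem_image coalescenceRight_injective.injOn]
    simp only [coalescenceLabeling_coalescenceRight ha hb]
    exact ncard_mul_add_eq_finsum_mem_add c hHinj (hH y hdeg)

end Coalescence

theorem coalescence_weak_harmonic_labeling_general {α β : Type*}
    (G : SimpleGraph α) (H : SimpleGraph β) (ℓG : α → ℤ) (ℓH : β → ℤ) (n m : ℕ)
    (hGinj : Function.Injective ℓG) (hGrange : Set.range ℓG = Set.Icc 0 ((n : ℤ) - 1))
    (hHinj : Function.Injective ℓH)
    (hHrange : Set.range ℓH = Set.Icc 0 ((m : ℤ) - 1) ∨ Set.range ℓH = Set.Ici 0)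
    (hGharm : ∀ x : α, (G.neighborSet x).ncard ≠ 1 →
      ((G.neighborSet x).ncard : ℤ) * ℓG x = ∑ᶠ y ∈ G.neighborSet x, ℓG y)
    (hHharm : ∀ x : β, (H.neighborSet x).ncard ≠ 1 →
      ((H.neighborSet x).ncard : ℤ) * ℓH x = ∑ᶠ y ∈ H.neighborSet x, ℓH y)
    (a : α) (ha : ℓG a = (n : ℤ) - 1) (v : α) (hav : G.neighborSet a = {v})
    (b : β) (hb : ℓH b = 0) (w : β) (hbw : H.neighborSet b = {w})
    (hsum : ℓG v + ℓH w = (n : ℤ) - 1) :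
    ∀ ℓ : α ⊕ {y : β // y ≠ b} → ℤ,
      (∀ x : α, ℓ (Sum.inl x) = ℓG x) →
      (∀ y : {y : β // y ≠ b}, ℓ (Sum.inr y) = ℓH y.1 + ((n : ℤ) - 1)) →
      Function.Injective ℓ ∧
      (Set.range ℓH = Set.Icc 0 ((m : ℤ) - 1) →
        Set.range ℓ = Set.Icc 0 ((n : ℤ) + (m : ℤ) - 2)) ∧
      (Set.range ℓH = Set.Ici 0 → Set.range ℓ = Set.Ici 0) ∧
      (∀ u, ((coalescence G H a b).neighborSet u).ncard ≠ 1 →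
        (((coalescence G H a b).neighborSet u).ncard : ℤ) * ℓ u =
          ∑ᶠ x ∈ (coalescence G H a b).neighborSet u, ℓ x) := by
  intro ℓ hl hr
  obtain rfl : ℓ = coalescenceLabeling b ℓG ℓH (n - 1) :=
    funext fun | .inl x => hl x | .inr y => hr y
  have hHnonneg : Set.range ℓH ⊆ Set.Ici 0 := by
    rcases hHrange with h | h <;> rw [h]
    exact Set.Icc_subset_Ici_self
  have hn : (0 : ℤ) ≤ n - 1 := (hGrange.subset ⟨a, ha⟩).1
  refine ⟨coalescenceLabeling_injective hGinj hHinj (fun x => (hGrange.subset ⟨x, rfl⟩).2)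
      (fun z => hHnonneg ⟨z, rfl⟩) hb, fun hI => ?_, fun hI => ?_,
    isWeakHarmonic_coalescenceLabeling hGharm hHharm hHinj ha hb hav hbw hsum⟩
  · have hm : (0 : ℤ) ≤ m - 1 := (hI.subset ⟨b, hb⟩).2
    rw [range_coalescenceLabeling ha hb, hGrange, hI, Set.image_add_const_Icc, zero_add,
      Set.Icc_union_Icc_eq_Icc hn (by linarith)]
    congr 1
    ring
  · rw [range_coalescenceLabeling ha hb, hGrange, hI, Set.image_add_const_Ici, zero_add,
      Set.Icc_union_Ici_eq_Ici hn]

/-- Coalescence of weakly labeled graphs.  Suppose `ℓG : V_G → {0,…,n−1}` and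
`ℓH : V_H → I` (with `I = {0,…,m−1}` or `I = ℤ_{≥0}`) are weak harmonic labelings, the
vertex `a` labeled `n−1` in `G` is a leaf with unique neighbor `v`, the vertex `b`
labeled `0` in `H` is a leaf with unique neighbor `w`, and `ℓG v + ℓH w = n − 1`.
Then `u ↦ ℓG u` on `G` and `u ↦ ℓH u + (n−1)` on `H` is a weak harmonic labeling of the
coalescence of `G` and `H` at `a` and `b`. -/
theorem coalescence_weak_harmonic_labeling {α β : Type*}
    (G : SimpleGraph α) (H : SimpleGraph β) (ℓG : α → ℤ) (ℓH : β → ℤ) (n m : ℕ)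
    (hn : 2 ≤ n)
    (hGinj : Function.Injective ℓG) (hGrange : Set.range ℓG = Set.Icc 0 ((n : ℤ) - 1))
    (hHinj : Function.Injective ℓH)
    (hHrange : Set.range ℓH = Set.Icc 0 ((m : ℤ) - 1) ∨ Set.range ℓH = Set.Ici 0)
    (hGharm : ∀ x : α, (G.neighborSet x).ncard ≠ 1 →
      ((G.neighborSet x).ncard : ℤ) * ℓG x = ∑ᶠ y ∈ G.neighborSet x, ℓG y)
    (hHharm : ∀ x : β, (H.neighborSet x).ncard ≠ 1 →
      ((H.neighborSet x).ncard : ℤ) * ℓH x = ∑ᶠ y ∈ H.neighborSet x, ℓH y)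
    (a : α) (ha : ℓG a = (n : ℤ) - 1) (v : α) (hav : G.neighborSet a = {v})
    (b : β) (hb : ℓH b = 0) (w : β) (hbw : H.neighborSet b = {w})
    (hsum : ℓG v + ℓH w = (n : ℤ) - 1) :
    ∀ ℓ : α ⊕ {y : β // y ≠ b} → ℤ,
      (∀ x : α, ℓ (Sum.inl x) = ℓG x) →
      (∀ y : {y : β // y ≠ b}, ℓ (Sum.inr y) = ℓH y.1 + ((n : ℤ) - 1)) →
      Function.Injective ℓ ∧
      (Set.range ℓH = Set.Icc 0 ((m : ℤ) - 1) →
        Set.range ℓ = Set.Icc 0 ((n : ℤ) + (m : ℤ) - 2)) ∧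
      (Set.range ℓH = Set.Ici 0 → Set.range ℓ = Set.Ici 0) ∧
      (∀ u, ((coalescence G H a b).neighborSet u).ncard ≠ 1 →
        (((coalescence G H a b).neighborSet u).ncard : ℤ) * ℓ u =
          ∑ᶠ x ∈ (coalescence G H a b).neighborSet u, ℓ x) :=
  coalescence_weak_harmonic_labeling_general G H ℓG ℓH n m hGinj hGrange hHinj hHrange hGharm hHharm
    a ha v hav b hb w hbw hsum
end

section
/- For every subset B of 𝓑 = {(i,k) : k > 1, 0 ≤ i ≤ k−1}, the graph P_B obtained from the bi-infinite path on ℤ by adding, for each (i,k) ∈ B and each s ∈ ℤ, the edge {sk+i, (s+1)k+i}, is a harmonically labeled graph: the identity labeling ℓ(n) = n satisfies deg(n)·n = Σ_{m ∼ n} m for every vertex n. -/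
/-- The index family `𝓑 = {(i,k) : k > 1, 0 ≤ i ≤ k−1}`. -/
def Bfam : Set (ℤ × ℤ) := {p | 1 < p.2 ∧ 0 ≤ p.1 ∧ p.1 ≤ p.2 - 1}

/-- `P_B`: the bi-infinite path on `ℤ` (edges `{x, x+1}`) together with, for each
`(i,k) ∈ B` and each `s ∈ ℤ`, the edge `{s·k+i, (s+1)·k+i}`. -/
def PB (B : Set (ℤ × ℤ)) : SimpleGraph ℤ :=
  SimpleGraph.fromRel (fun x y =>
    y = x + 1 ∨ ∃ p ∈ B, ∃ s : ℤ, x = s * p.2 + p.1 ∧ y = (s + 1) * p.2 + p.1)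

lemma PB_refl_mem (B : Set (ℤ × ℤ)) (n m : ℤ) (h : (PB B).Adj n m) :
    (PB B).Adj n (2 * n - m) := by
  rw [PB, SimpleGraph.fromRel_adj] at h ⊢
  obtain ⟨hne, h⟩ := h
  refine ⟨by omega, ?_⟩
  rcases h with (h | ⟨p, hp, s, h1, h2⟩) | (h | ⟨p, hp, s, h1, h2⟩)
  · exact Or.inr (Or.inl (by omega))
  · subst h1; subst h2
    exact Or.inr (Or.inr ⟨p, hp, s - 1, by ring, by ring⟩)
  · exact Or.inl (Or.inl (by omega))
  · subst h1; subst h2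
    exact Or.inl (Or.inr ⟨p, hp, s + 1, by ring, by ring⟩)

/-- For every `B ⊆ 𝓑`, the identity labeling makes `P_B` a harmonically labeled graph:
`deg(n)·n = Σ_{m ∼ n} m` for every vertex `n`. -/
theorem PB_identity_harmonic (B : Set (ℤ × ℤ)) (hB : B ⊆ Bfam) :
    ∀ n : ℤ, (((PB B).neighborSet n).ncard : ℤ) * n = ∑ᶠ m ∈ (PB B).neighborSet n, m := by
  intro n
  set s := (PB B).neighborSet n with hs
  by_cases hfin : s.Finite
  · have hsum : ∑ᶠ m ∈ s, m = ∑ m ∈ hfin.toFinset, m := finsum_mem_eq_finite_toFinset_sum _ hfin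
    have hcard : s.ncard = hfin.toFinset.card := Set.ncard_eq_toFinset_card s hfin
    set t := hfin.toFinset with ht
    have hmem : ∀ m ∈ t, 2 * n - m ∈ t := by
      intro m hm
      rw [ht, Set.Finite.mem_toFinset] at hm ⊢
      exact PB_refl_mem B n m hm
    have key : ∑ m ∈ t, m = ∑ m ∈ t, (2 * n - m) := by
      refine Finset.sum_nbij' (fun m => 2 * n - m) (fun m => 2 * n - m) hmem hmem
        (by intro a _; ring) (by intro a _; ring) (by intro a ha; ring)
    have h2 : 2 * (∑ m ∈ t, m) = (t.card : ℤ) * (2 * n) := by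
      have : (∑ m ∈ t, m) + (∑ m ∈ t, (2 * n - m)) = ∑ m ∈ t, (2 * n) := by
        rw [← Finset.sum_add_distrib]; apply Finset.sum_congr rfl; intro m _; ring
      rw [← key] at this
      simp [Finset.sum_const, nsmul_eq_mul] at this; linarith
    rw [hsum, hcard]
    linarith
  · rw [Set.Infinite.ncard (by simpa using hfin)]
    rw [finsum_mem_eq_zero_of_infinite]
    · simp
    · have : s ∩ Function.support (id : ℤ → ℤ) = s \ {0} := by
        ext x; simp [Function.support]
      rw [show (fun m : ℤ => m) = id from rfl, this]
      exact Set.Infinite.diff (by simpa using hfin) (Set.finite_singleton 0)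
end

section
/- The family {P_B : B ⊆ 𝓑} of harmonically labeled graphs is uncountable, where 𝓑 = {(i,k) : k > 1, 0 ≤ i ≤ k−1}. -/
lemma mem_iff_adj {B : Set (ℤ × ℤ)} (hB : B ⊆ Bfam) {i k : ℤ} (h : (i, k) ∈ Bfam) :
    (i, k) ∈ B ↔ (PB B).Adj i (k + i) := by
  obtain ⟨hk, hi0, hik⟩ := h
  constructor
  · intro hmem
    refine ⟨by omega, Or.inl (Or.inr ⟨(i, k), hmem, 0, by ring, by ring⟩)⟩
  · rintro ⟨hne, hrel | hrel⟩
    · rcases hrel with h1 | ⟨p, hp, s, hx, hy⟩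
      · omega
      · obtain ⟨hp2, hp10, hp1k⟩ := hB hp
        have hkp : k = p.2 := by
          have : (s + 1) * p.2 = s * p.2 + p.2 := by ring
          linarith
        have hs : s = 0 := by
          rcases lt_trichotomy s 0 with hs | hs | hs
          · have : s * p.2 ≤ -1 * p.2 :=
              mul_le_mul_of_nonneg_right (by omega) (by omega)
            linarith
          · exact hs
          · have : 1 * p.2 ≤ s * p.2 :=
              mul_le_mul_of_nonneg_right (by omega) (by omega)
            linarith
        have hip : i = p.1 := by
          subst hs; linarith
        have : (i, k) = p := Prod.ext hip hkp
        rwa [this]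
    · rcases hrel with h1 | ⟨p, hp, s, hx, hy⟩
      · omega
      · obtain ⟨hp2, hp10, hp1k⟩ := hB hp
        have : (s + 1) * p.2 = s * p.2 + p.2 := by ring
        linarith

lemma PB_injOn {B B' : Set (ℤ × ℤ)} (hB : B ⊆ Bfam) (hB' : B' ⊆ Bfam)
    (h : PB B = PB B') : B = B' := by
  ext ⟨i, k⟩
  constructor
  · intro hm
    have hf := hB hm
    exact (mem_iff_adj hB' hf).mpr (h ▸ (mem_iff_adj hB hf).mp hm)
  · intro hm
    have hf := hB' hm
    exact (mem_iff_adj hB hf).mpr (h ▸ (mem_iff_adj hB' hf).mp hm)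

/-- The family `{P_B : B ⊆ 𝓑}` of harmonically labeled graphs is uncountable. -/
theorem PB_family_uncountable :
    ¬ ({G : SimpleGraph ℤ | ∃ B ⊆ Bfam, G = PB B}).Countable := by
  intro hc
  set g : ℕ → ℤ × ℤ := fun k => ((0 : ℤ), (k : ℤ) + 2) with hg
  have hgsub : ∀ S : Set ℕ, g '' S ⊆ Bfam := by
    rintro S p ⟨k, _, rfl⟩
    exact ⟨by simp [hg]; omega, le_refl _, by simp [hg]; omega⟩
  set f : Set ℕ → SimpleGraph ℤ := fun S => PB (g '' S) with hf
  have hginj : Function.Injective g := by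
    intro a b hab
    simpa [hg] using hab
  have hfinj : Function.Injective f := by
    intro S T hST
    have := PB_injOn (hgsub S) (hgsub T) hST
    exact (Set.image_eq_image hginj).mp this
  have hrange : Set.range f ⊆ {G : SimpleGraph ℤ | ∃ B ⊆ Bfam, G = PB B} := by
    rintro G ⟨S, rfl⟩
    exact ⟨g '' S, hgsub S, rfl⟩
  have hcr : (Set.range f).Countable := hc.mono hrange
  have : (Set.univ : Set (Set ℕ)).Countable := by
    have := hcr.preimage hfinj
    simpa using this
  have : Countable (Set ℕ) := Set.countable_univ_iff.mp this
  obtain ⟨e, he⟩ := exists_injective_nat (Set ℕ)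
  exact Function.cantor_injective e he
end

section
/- For the collection 𝓐_{(G,ℓ)} = {A_v : v non-leaf}, where A_v = {ℓ(w) : w ∈ N_G(v)} (closed neighborhood), each A_v is a non-trivial harmonic subset of ℤ with av(A_v) = ℓ(v); moreover A_v ≠ A_u whenever v ≠ u are non-leaves, and if av(A_v) ∈ A_u then av(A_u) ∈ A_v. -/
/-- Properties of the collection `𝓐_{(G,ℓ)} = {A_v : v non-leaf}` where
`A_v = ℓ '' N_G(v)` (closed neighborhood).  For a connected graph `G` with at least three
vertices and bounded degree, and a weak harmonic labeling `ℓ` onto an integer interval: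
each `A_v` is a non-trivial harmonic subset of `ℤ` with average `ℓ v`; distinct non-leaves
give distinct sets; and `av(A_v) ∈ A_u` implies `av(A_u) ∈ A_v`. -/
theorem harmonic_subsets_of_weak_labeling {V : Type*} (G : SimpleGraph V)
    (hconn : G.Connected) (hcard : (3 : ℕ∞) ≤ ENat.card V)
    (hlocfin : ∀ v : V, (G.neighborSet v).Finite)
    (hbdd : ∃ D : ℕ, ∀ v : V, (G.neighborSet v).ncard ≤ D)
    (ℓ : V → ℤ) (hinj : Function.Injective ℓ) (hint : (Set.range ℓ).OrdConnected)
    (hharm : ∀ v : V, (G.neighborSet v).ncard ≠ 1 →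
      ((G.neighborSet v).ncard : ℤ) * ℓ v = ∑ᶠ w ∈ G.neighborSet v, ℓ w) :
    ∀ v : V, (G.neighborSet v).ncard ≠ 1 →
      (2 ≤ (ℓ '' insert v (G.neighborSet v)).ncard) ∧
      (ℓ v ∈ ℓ '' insert v (G.neighborSet v)) ∧
      (((ℓ '' insert v (G.neighborSet v)).ncard : ℤ) * ℓ v =
        ∑ᶠ k ∈ ℓ '' insert v (G.neighborSet v), k) ∧
      (∀ u : V, (G.neighborSet u).ncard ≠ 1 → v ≠ u →
        ℓ '' insert v (G.neighborSet v) ≠ ℓ '' insert u (G.neighborSet u)) ∧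
      (∀ u : V, (G.neighborSet u).ncard ≠ 1 →
        ℓ v ∈ ℓ '' insert u (G.neighborSet u) →
        ℓ u ∈ ℓ '' insert v (G.neighborSet v)) := by
  -- V is nontrivial
  have hnt : Nontrivial V := by
    rw [← ENat.one_lt_card_iff_nontrivial]
    exact lt_of_lt_of_le (by norm_num) hcard
  -- every vertex has a neighbor
  have hne : ∀ v : V, (G.neighborSet v).Nonempty := by
    intro v
    obtain ⟨u, hu⟩ := exists_ne v
    obtain ⟨p⟩ := hconn v u
    have hp : ¬ p.Nil := SimpleGraph.Walk.not_nil_of_ne (Ne.symm hu)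
    rw [SimpleGraph.Walk.not_nil_iff] at hp
    obtain ⟨w, h, -, -⟩ := hp
    exact ⟨w, h⟩
  -- key computations
  have hncard : ∀ v : V, (ℓ '' insert v (G.neighborSet v)).ncard
      = (G.neighborSet v).ncard + 1 := by
    intro v
    rw [Set.ncard_image_of_injective _ hinj,
      Set.ncard_insert_of_notMem (SimpleGraph.notMem_neighborSet_self G) (hlocfin v)]
  have havg : ∀ v : V, (G.neighborSet v).ncard ≠ 1 →
      (((ℓ '' insert v (G.neighborSet v)).ncard : ℤ) * ℓ v =
        ∑ᶠ k ∈ ℓ '' insert v (G.neighborSet v), k) := by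
    intro v hv
    rw [hncard v, finsum_mem_image (hinj.injOn),
      finsum_mem_insert _ (SimpleGraph.notMem_neighborSet_self G) (hlocfin v),
      ← hharm v hv]
    push_cast
    ring
  intro v hv
  have hdeg2 : 2 ≤ (G.neighborSet v).ncard := by
    have h0 : 0 < (G.neighborSet v).ncard := (Set.ncard_pos (hlocfin v)).mpr (hne v)
    omega
  refine ⟨?_, ⟨v, Set.mem_insert _ _, rfl⟩, havg v hv, ?_, ?_⟩
  · rw [hncard v]; omega
  · intro u hu hvu heq
    have h1 := havg v hv
    have h2 := havg u hu
    rw [heq] at h1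
    rw [← h2] at h1
    have hc : ((ℓ '' insert u (G.neighborSet u)).ncard : ℤ) ≠ 0 := by
      rw [hncard u]; positivity
    exact hvu (hinj (mul_left_cancel₀ hc h1))
  · intro u hu hmem
    obtain ⟨w, hw, hwv⟩ := hmem
    have hw' : w = v := hinj hwv
    subst hw'
    rcases hw with h | h
    · exact ⟨u, Set.mem_insert_iff.mpr (Or.inl h.symm), rfl⟩
    · exact ⟨u, Or.inr ((SimpleGraph.mem_neighborSet _ _ _).mpr (h.symm)), rfl⟩
end

section
/- Let 𝓐 be a collection of non-trivial harmonic subsets of ℤ satisfying properties (P1)–(P5), and let G_𝓐 be the graph with vertex set I = ∪_{C∈𝓐} C and i ∼ j iff there exists A ∈ 𝓐 with i = av(A) and j ∈ A, or j = av(A) and i ∈ A. Then a vertex i of G_𝓐 is a non-leaf if and only if there exists A ∈ 𝓐 with i = av(A); moreover this A is unique and equals the closed neighborhood of i in G_𝓐. -/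
/-- `a` is the (integer) average of the finite set `A ⊆ ℤ` and belongs to `A`;
i.e. `A` is a harmonic subset with `av(A) = a`. -/
def avOf (A : Finset ℤ) (a : ℤ) : Prop :=
  a ∈ A ∧ (A.card : ℤ) * a = ∑ k ∈ A, k

/-- The graph `G_𝓐` associated to a collection `𝓐` of harmonic subsets of `ℤ`:
vertices are the integers covered by `𝓐`, and `i ∼ j` iff some `A ∈ 𝓐` has
`av(A) = i` and `j ∈ A`, or `av(A) = j` and `i ∈ A`. -/
def Hgraph (𝓐 : Set (Finset ℤ)) : SimpleGraph {x : ℤ // ∃ A ∈ 𝓐, x ∈ A} :=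
  SimpleGraph.fromRel (fun i j => ∃ A ∈ 𝓐, ∃ a : ℤ, avOf A a ∧ a = i.1 ∧ j.1 ∈ A)

/-!
If `i = av(A)` with `A ∈ 𝓐`, every other element of `A` is a neighbour of `i`, and there are at
least two of them since no harmonic set has exactly two elements. Every neighbour `x` of
such an `i` lies in `A`: either `x` lies in a member with average `i`, which is `A` by (P2), or
`x = av(B)` for a member `B ∋ i`, and (P4) puts `av(B)` into `A`. If `i` is the average of no
member, then by (P3) it lies in exactly one member `A`, and its only neighbour is `av(A)`.
-/

namespace avOf

variable {A : Finset ℤ} {a : ℤ}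

theorem unique {b : ℤ} (ha : avOf A a) (hb : avOf A b) : a = b := by
  have hcard : (0 : ℤ) < A.card := by exact_mod_cast Finset.card_pos.mpr ⟨a, ha.1⟩
  exact mul_left_cancel₀ hcard.ne' (ha.2.trans hb.2.symm)

theorem one_lt_card_erase (h : avOf A a) (h2 : 2 ≤ A.card) : 1 < (A.erase a).card := by
  have hcard : (A.erase a).card + 1 = A.card := Finset.card_erase_add_one h.1
  by_contra! hle
  obtain ⟨b, hb⟩ : ∃ b, A.erase a = {b} := Finset.card_eq_one.mp (by omega)
  have hba : b ≠ a := Finset.ne_of_mem_erase (hb ▸ Finset.mem_singleton_self b)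
  have hsum : ∑ k ∈ A, k = a + b := by
    rw [← Finset.add_sum_erase A (fun k => k) h.1, hb, Finset.sum_singleton]
  have hav := h.2
  rw [hsum, ← hcard, hb, Finset.card_singleton] at hav
  push_cast at hav
  exact hba (by linarith)

end avOf

section Hgraph

variable {𝓐 : Set (Finset ℤ)}

theorem Hgraph_adj_iff {i j : {x : ℤ // ∃ A ∈ 𝓐, x ∈ A}} :
    (Hgraph 𝓐).Adj i j ↔ i.1 ≠ j.1 ∧
      ((∃ A ∈ 𝓐, avOf A i.1 ∧ j.1 ∈ A) ∨ ∃ A ∈ 𝓐, avOf A j.1 ∧ i.1 ∈ A) := by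
  simp [Hgraph, Subtype.ext_iff]

theorem Hgraph_adj_of_avOf {A : Finset ℤ} (hA : A ∈ 𝓐) {i : {x : ℤ // ∃ A ∈ 𝓐, x ∈ A}}
    (hav : avOf A i.1) {x : ℤ} (hx : x ∈ A) (hxi : x ≠ i.1) :
    (Hgraph 𝓐).Adj i ⟨x, A, hA, hx⟩ :=
  Hgraph_adj_iff.mpr ⟨hxi.symm, Or.inl ⟨A, hA, hav, hx⟩⟩

theorem Hgraph_not_existsUnique_adj_of_avOf {A : Finset ℤ} (h2 : 2 ≤ A.card) (hA : A ∈ 𝓐)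
    {i : {x : ℤ // ∃ A ∈ 𝓐, x ∈ A}} (hav : avOf A i.1) : ¬ ∃! j, (Hgraph 𝓐).Adj i j := by
  obtain ⟨b, hb, c, hc, hbc⟩ := Finset.one_lt_card.mp (hav.one_lt_card_erase h2)
  rw [Finset.mem_erase] at hb hc
  rintro ⟨j, -, hj⟩
  have hbj := hj _ (Hgraph_adj_of_avOf hA hav hb.2 hb.1)
  have hcj := hj _ (Hgraph_adj_of_avOf hA hav hc.2 hc.1)
  exact hbc (congrArg Subtype.val (hbj.trans hcj.symm))

theorem Hgraph_existsUnique_adj_of_forall_not_avOf (hA : ∀ A ∈ 𝓐, ∃ a : ℤ, avOf A a)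
    (hP3 : ∀ A ∈ 𝓐, ∀ B ∈ 𝓐, A ≠ B → ∀ t : ℤ, t ∈ A → t ∈ B → ∃ C ∈ 𝓐, avOf C t)
    {i : {x : ℤ // ∃ A ∈ 𝓐, x ∈ A}} (hi : ∀ C ∈ 𝓐, ¬ avOf C i.1) :
    ∃! j, (Hgraph 𝓐).Adj i j := by
  obtain ⟨A, hA𝓐, hiA⟩ := i.2
  have hmem_unique : ∀ B ∈ 𝓐, i.1 ∈ B → B = A := fun B hB hiB => by
    by_contra hne
    obtain ⟨C, hC, hav⟩ := hP3 B hB A hA𝓐 hne i.1 hiB hiA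
    exact hi C hC hav
  obtain ⟨a, ha⟩ := hA A hA𝓐
  have hai : a ≠ i.1 := fun h => hi A hA𝓐 (h ▸ ha)
  refine ⟨⟨a, A, hA𝓐, ha.1⟩, Hgraph_adj_iff.mpr ⟨hai.symm, Or.inr ⟨A, hA𝓐, ha, hiA⟩⟩, ?_⟩
  intro j hj
  obtain ⟨-, ⟨B, hB, hav, -⟩ | ⟨B, hB, hav, hiB⟩⟩ := Hgraph_adj_iff.mp hj
  · exact absurd hav (hi B hB)
  · obtain rfl := hmem_unique B hB hiB
    exact Subtype.ext (hav.unique ha)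

theorem Hgraph_mem_iff_of_avOf
    (hP2 : ∀ A ∈ 𝓐, ∀ B ∈ 𝓐, ∀ a : ℤ, avOf A a → avOf B a → A = B)
    (hP4 : ∀ A ∈ 𝓐, ∀ B ∈ 𝓐, ∀ a : ℤ, avOf A a → a ∈ B → ∃ b : ℤ, avOf B b ∧ b ∈ A)
    {A : Finset ℤ} (hA : A ∈ 𝓐) {i : {x : ℤ // ∃ A ∈ 𝓐, x ∈ A}} (hav : avOf A i.1) (x : ℤ) :
    x ∈ A ↔ (x = i.1 ∨ ∃ h : ∃ C ∈ 𝓐, x ∈ C, (Hgraph 𝓐).Adj i ⟨x, h⟩) := by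
  refine ⟨fun hx => ?_, ?_⟩
  · by_cases hxi : x = i.1
    · exact Or.inl hxi
    · exact Or.inr ⟨_, Hgraph_adj_of_avOf hA hav hx hxi⟩
  rintro (rfl | ⟨_, hadj⟩)
  · exact hav.1
  obtain ⟨-, ⟨B, hB, havB, hxB⟩ | ⟨B, hB, havB, hiB⟩⟩ := Hgraph_adj_iff.mp hadj
  · exact hP2 B hB A hA i.1 havB hav ▸ hxB
  · obtain ⟨b, hb, hbA⟩ := hP4 A hA B hB i.1 hav hiB
    exact (hb.unique havB : b = x) ▸ hbA

end Hgraph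

theorem Hgraph_nonleaf_iff_average_general (𝓐 : Set (Finset ℤ))
    (hA : ∀ A ∈ 𝓐, 2 ≤ A.card ∧ ∃ a : ℤ, avOf A a)
    (hP2 : ∀ A ∈ 𝓐, ∀ B ∈ 𝓐, ∀ a : ℤ, avOf A a → avOf B a → A = B)
    (hP3 : ∀ A ∈ 𝓐, ∀ B ∈ 𝓐, A ≠ B → ∀ t : ℤ, t ∈ A → t ∈ B → ∃ C ∈ 𝓐, avOf C t)
    (hP4 : ∀ A ∈ 𝓐, ∀ B ∈ 𝓐, ∀ a : ℤ, avOf A a → a ∈ B → ∃ b : ℤ, avOf B b ∧ b ∈ A) :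
    ∀ i : {x : ℤ // ∃ A ∈ 𝓐, x ∈ A},
      ((¬ ∃! j, (Hgraph 𝓐).Adj i j) ↔ ∃ A ∈ 𝓐, avOf A i.1) ∧
      (∀ A ∈ 𝓐, avOf A i.1 →
        (∀ B ∈ 𝓐, avOf B i.1 → B = A) ∧
        (∀ x : ℤ, x ∈ A ↔ (x = i.1 ∨
          ∃ h : ∃ C ∈ 𝓐, x ∈ C, (Hgraph 𝓐).Adj i ⟨x, h⟩))) := by
  intro i
  refine ⟨⟨fun hnonleaf => ?_, fun ⟨A, hA𝓐, hav⟩ =>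
      Hgraph_not_existsUnique_adj_of_avOf (hA A hA𝓐).1 hA𝓐 hav⟩,
    fun A hA𝓐 hav => ⟨fun B hB havB => hP2 B hB A hA𝓐 i.1 havB hav,
      Hgraph_mem_iff_of_avOf hP2 hP4 hA𝓐 hav⟩⟩
  by_contra! hno
  exact hnonleaf (Hgraph_existsUnique_adj_of_forall_not_avOf (fun A h => (hA A h).2) hP3 hno)

/-- For a collection `𝓐` of non-trivial harmonic subsets of `ℤ` satisfying (P1)–(P5),
a vertex `i` of `G_𝓐` is a non-leaf iff `i` is the average of some `A ∈ 𝓐`; moreover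
this `A` is unique and equals the closed neighborhood of `i` in `G_𝓐`. -/
theorem Hgraph_nonleaf_iff_average (𝓐 : Set (Finset ℤ))
    (hA : ∀ A ∈ 𝓐, 2 ≤ A.card ∧ ∃ a : ℤ, avOf A a)
    (hP1 : ({x : ℤ | ∃ A ∈ 𝓐, x ∈ A}).OrdConnected)
    (hP2 : ∀ A ∈ 𝓐, ∀ B ∈ 𝓐, ∀ a : ℤ, avOf A a → avOf B a → A = B)
    (hP3 : ∀ A ∈ 𝓐, ∀ B ∈ 𝓐, A ≠ B → ∀ t : ℤ, t ∈ A → t ∈ B → ∃ C ∈ 𝓐, avOf C t)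
    (hP4 : ∀ A ∈ 𝓐, ∀ B ∈ 𝓐, ∀ a : ℤ, avOf A a → a ∈ B → ∃ b : ℤ, avOf B b ∧ b ∈ A)
    (hP5 : ∀ A ∈ 𝓐, ∀ B ∈ 𝓐,
      Relation.ReflTransGen (fun X Y => X ∈ 𝓐 ∧ Y ∈ 𝓐 ∧ ∃ a : ℤ, avOf X a ∧ a ∈ Y) A B) :
    ∀ i : {x : ℤ // ∃ A ∈ 𝓐, x ∈ A},
      ((¬ ∃! j, (Hgraph 𝓐).Adj i j) ↔ ∃ A ∈ 𝓐, avOf A i.1) ∧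
      (∀ A ∈ 𝓐, avOf A i.1 →
        (∀ B ∈ 𝓐, avOf B i.1 → B = A) ∧
        (∀ x : ℤ, x ∈ A ↔ (x = i.1 ∨
          ∃ h : ∃ C ∈ 𝓐, x ∈ C, (Hgraph 𝓐).Adj i ⟨x, h⟩))) :=
  Hgraph_nonleaf_iff_average_general 𝓐 hA hP2 hP3 hP4
end
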